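/- arXiv:1103.4730 — 8 statements merged into one kernel-verified Lean document; each statement's English description precedes it below -/
import Mathlib

section
/- Let $A = k[s,x,y]$, $g = xy(x-y)(x+y-sy)$, and $n \geq 4$ an integer. Then $(x,y)^{n+2} \subseteq (x^n, y^n, g)$ as ideals of $A$. -/
/-!
Modulo `g = xy(x - y)(x + y - sy)` one has `x³y ≡ s x²y² - (s - 1) xy³`, so a monomial `xⁱyʲ`
with `i ≥ 3`, `j ≥ 1` is congruent to a combination of monomials of the same degree with smaller
`x`-exponent. A monomial of degree `n + 2` that is divisible by neither `xⁿ` nor `yⁿ` has both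
exponents at least `3`, so descending on the `x`-exponent puts every such monomial in
`(xⁿ, yⁿ, g)`.
-/

open MvPolynomial

namespace Ideal

theorem span_pair_pow_le_of_forall_mem {R : Type*} [CommSemiring R] {x y : R} {m : ℕ}
    {I : Ideal R} (h : ∀ i ≤ m, x ^ i * y ^ (m - i) ∈ I) : span {x, y} ^ m ≤ I := by
  rw [span_insert, ← add_eq_sup, add_pow, sum_eq_sup]
  refine Finset.sup_le fun i hi => ?_
  rw [span_singleton_pow, span_singleton_pow, span_singleton_mul_span_singleton]
  exact mul_le_left.trans <| (span_singleton_le_iff_mem _).2 <|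
    h i (Nat.lt_succ_iff.1 (Finset.mem_range.1 hi))

end Ideal

section

variable {R : Type*} [CommRing R] (s : R)

theorem pow_mul_pow_eq_mul_add (x y : R) (a b : ℕ) :
    x ^ (a + 3) * y ^ (b + 1) = x ^ a * y ^ b * (x * y * (x - y) * (x + y - s * y)) +
      (s * (x ^ (a + 2) * y ^ (b + 2)) - (s - 1) * (x ^ (a + 1) * y ^ (b + 3))) := by
  ring

theorem pow_mul_pow_mem_of_add_le {x y : R} {J : Ideal R} {n : ℕ} (hxn : x ^ n ∈ J) (hyn : y ^ n ∈ J)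
    (hg : x * y * (x - y) * (x + y - s * y) ∈ J) {i j : ℕ} (hij : n + 2 ≤ i + j) :
    x ^ i * y ^ j ∈ J := by
  induction i using Nat.strong_induction_on generalizing j with
  | _ i ih =>
    rcases le_or_gt n i with hi | hi
    · rw [← Nat.sub_add_cancel hi, pow_add, mul_right_comm]
      exact J.mul_mem_left _ hxn
    rcases le_or_gt n j with hj | hj
    · rw [← Nat.sub_add_cancel hj, pow_add, ← mul_assoc]
      exact J.mul_mem_left _ hyn
    obtain ⟨a, rfl⟩ : ∃ a, i = a + 3 := ⟨i - 3, by omega⟩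
    obtain ⟨b, rfl⟩ : ∃ b, j = b + 1 := ⟨j - 1, by omega⟩
    rw [pow_mul_pow_eq_mul_add]
    exact J.add_mem (J.mul_mem_left _ hg) <| J.sub_mem
      (J.mul_mem_left _ (ih (a + 2) (by omega) (by omega)))
      (J.mul_mem_left _ (ih (a + 1) (by omega) (by omega)))

theorem span_pair_pow_add_two_le (x y : R) (n : ℕ) :
    Ideal.span {x, y} ^ (n + 2) ≤
      Ideal.span {x ^ n, y ^ n, x * y * (x - y) * (x + y - s * y)} :=
  Ideal.span_pair_pow_le_of_forall_mem fun i hi =>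
    pow_mul_pow_mem_of_add_le s (n := n) (Ideal.subset_span (by simp))
      (Ideal.subset_span (by simp)) (Ideal.subset_span (by simp)) (by omega)

end

theorem stmt1_general (k : Type*) [Field k]
    (s x y g : MvPolynomial (Fin 3) k)
    (hg : g = x * y * (x - y) * (x + y - s * y))
    (n : ℕ) :
    (Ideal.span {x, y}) ^ (n + 2) ≤ Ideal.span {x ^ n, y ^ n, g} :=
  hg ▸ span_pair_pow_add_two_le s x y n

/-- In `A = k[s,x,y]` with `g = xy(x-y)(x+y-sy)` and `n ≥ 4`,
`(x,y)^(n+2) ⊆ (xⁿ, yⁿ, g)`. -/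
theorem stmt1 (k : Type*) [Field k]
    (s x y g : MvPolynomial (Fin 3) k)
    (hs : s = X 0) (hx : x = X 1) (hy : y = X 2)
    (hg : g = x * y * (x - y) * (x + y - s * y))
    (n : ℕ) (hn : 4 ≤ n) :
    (Ideal.span {x, y}) ^ (n + 2) ≤ Ideal.span {x ^ n, y ^ n, g} :=
  stmt1_general k s x y g hg n
end

section
/- Let $A = k[s,x,y]$, let $m \geq 4$ be an integer with the characteristic of $k$ not dividing $m$, let $n = 2m+1$, $g = xy(x-y)(x+y-sy)$, and $f = \sum_{j=2}^{n-1} (-1)^j x^{n+1-j} y^j$. Then $s f \in (x^n, y^n, g)$. -/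
open MvPolynomial

lemma key {R : Type*} [CommRing R] (s x y : R) : ∀ q : ℕ, ∃ c : R,
    s * (∑ j ∈ Finset.Icc 2 (2*q+2), (-1:R)^j * x^(2*q+4-j) * y^j) =
      y * x^(2*q+3) + (s-1)*x*y^(2*q+3) + c * (x*y*(x-y)*(x+y-s*y)) := by
  intro q
  induction q with
  | zero =>
    refine ⟨-1, ?_⟩
    simp [Finset.Icc_self]
    ring
  | succ q ih =>
    obtain ⟨c, hc⟩ := ih
    refine ⟨x^2*c - y^(2*q+2), ?_⟩
    have h1 : 2*(q+1)+2 = (2*q+3)+1 := by ring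
    have h2 : 2*q+3 = (2*q+2)+1 := by ring
    rw [h1, Finset.sum_Icc_succ_top (by omega), h2, Finset.sum_Icc_succ_top (by omega), ← h2]
    have hsum : (∑ j ∈ Finset.Icc 2 (2*q+2), (-1:R)^j * x^(2*(q+1)+4-j) * y^j)
        = x^2 * (∑ j ∈ Finset.Icc 2 (2*q+2), (-1:R)^j * x^(2*q+4-j) * y^j) := by
      rw [Finset.mul_sum]
      refine Finset.sum_congr rfl fun j hj => ?_
      have hj' : j ≤ 2*q+2 := (Finset.mem_Icc.mp hj).2
      have : 2*(q+1)+4-j = (2*q+4-j)+2 := by omega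
      rw [this, pow_add]
      ring
    rw [hsum]
    have hodd : (-1:R)^(2*q+3) = -1 := Odd.neg_one_pow ⟨q+1, by ring⟩
    have heven : (-1:R)^(2*q+3+1) = 1 := Even.neg_one_pow ⟨q+2, by ring⟩
    rw [hodd, heven]
    have e1 : 2*(q+1)+4-(2*q+3) = 3 := by omega
    have e2 : 2*(q+1)+4-(2*q+3+1) = 2 := by omega
    rw [e1, e2]
    linear_combination x^2 * hc

/-- With `A = k[s,x,y]`, `m ≥ 4`, `char k ∤ m`, `n = 2m+1`,
`g = xy(x-y)(x+y-sy)`, and `f = ∑_{j=2}^{n-1} (-1)^j x^{n+1-j} y^j`, we have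
`s·f ∈ (xⁿ, yⁿ, g)`. -/
theorem stmt2 (k : Type*) [Field k]
    (s x y g f : MvPolynomial (Fin 3) k)
    (hs : s = X 0) (hx : x = X 1) (hy : y = X 2)
    (m n : ℕ) (hm : 4 ≤ m) (hchar : ¬ (ringChar k ∣ m)) (hn : n = 2 * m + 1)
    (hg : g = x * y * (x - y) * (x + y - s * y))
    (hf : f = ∑ j ∈ Finset.Icc 2 (n - 1), (-1 : MvPolynomial (Fin 3) k) ^ j * x ^ (n + 1 - j) * y ^ j) :
    s * f ∈ Ideal.span {x ^ n, y ^ n, g} := by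
  obtain ⟨q, hq⟩ : ∃ q, m = q + 1 := ⟨m - 1, by omega⟩
  obtain ⟨c, hc⟩ := key s x y q
  have hn1 : n - 1 = 2*q+2 := by omega
  have hn2 : ∀ j ∈ Finset.Icc 2 (2*q+2), n + 1 - j = 2*q+4-j := fun j hj => by
    have := (Finset.mem_Icc.mp hj).2; omega
  have hf' : s * f = y * x^n + (s-1)*x*y^n + c * g := by
    rw [hf, hn1, Finset.sum_congr rfl (fun j hj => by rw [hn2 j hj]), hg]
    have : n = 2*q+3 := by omega
    rw [this]; exact hc
  rw [hf']
  refine add_mem (add_mem ?_ ?_) ?_ <;>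
    exact Ideal.mul_mem_left _ _ (Ideal.subset_span (by simp))
end

section
/- Let $A = k[s,x,y]$, $g = xy(x-y)(x+y-sy)$, and set $t = s - 1$. Then for all integers $i \geq 1$, $a \geq 1$, and $b \geq i+1$, one has $t^i x^a y^b (x-y) \equiv x^{a+i} y^{b-i}(x-y) \pmod{(g)}$. -/
open MvPolynomial

/-- With `A = k[s,x,y]`, `g = xy(x-y)(x+y-sy)` and `t = s-1`, for all
`i ≥ 1`, `a ≥ 1`, `b ≥ i+1` we have
`tⁱ xᵃ yᵇ (x-y) ≡ x^{a+i} y^{b-i} (x-y) (mod (g))`. -/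
theorem stmt3 (k : Type*) [Field k]
    (s x y g t : MvPolynomial (Fin 3) k)
    (hs : s = X 0) (hx : x = X 1) (hy : y = X 2)
    (hg : g = x * y * (x - y) * (x + y - s * y)) (ht : t = s - 1) :
    ∀ i a b : ℕ, 1 ≤ i → 1 ≤ a → i + 1 ≤ b →
      t ^ i * x ^ a * y ^ b * (x - y) - x ^ (a + i) * y ^ (b - i) * (x - y)
        ∈ Ideal.span {g} := by
  -- reduce to divisibility
  have base : ∀ a b : ℕ, g ∣ t * x ^ (a + 1) * y ^ (b + 2) * (x - y)
      - x ^ (a + 2) * y ^ (b + 1) * (x - y) := by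
    intro a b
    refine ⟨-(x ^ a * y ^ b), ?_⟩
    subst hg ht
    ring
  intro i
  induction i with
  | zero => intro a b h; omega
  | succ i ih =>
    intro a b _ ha hb
    rw [Ideal.mem_span_singleton]
    rcases Nat.eq_zero_or_pos i with hi | hi
    · subst hi
      obtain ⟨a', rfl⟩ : ∃ a', a = a' + 1 := ⟨a - 1, by omega⟩
      obtain ⟨b', rfl⟩ : ∃ b', b = b' + 2 := ⟨b - 2, by omega⟩
      simpa using base a' b'
    · -- step: i ≥ 1
      have h1 : g ∣ t ^ i * (t * x ^ a * y ^ b * (x - y)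
          - x ^ (a + 1) * y ^ (b - 1) * (x - y)) := by
        obtain ⟨a', rfl⟩ : ∃ a', a = a' + 1 := ⟨a - 1, by omega⟩
        obtain ⟨b', rfl⟩ : ∃ b', b = b' + 2 := ⟨b - 2, by omega⟩
        exact Dvd.dvd.mul_left (by simpa using base a' b') _
      have h2 : g ∣ t ^ i * x ^ (a + 1) * y ^ (b - 1) * (x - y)
          - x ^ ((a + 1) + i) * y ^ ((b - 1) - i) * (x - y) := by
        rw [← Ideal.mem_span_singleton]
        exact ih (a + 1) (b - 1) hi (by omega) (by omega)
      have := dvd_add h1 h2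
      convert this using 1
      have e1 : a + 1 + i = a + (i + 1) := by omega
      have e2 : b - 1 - i = b - (i + 1) := by omega
      rw [e1, e2]
      ring
end

section
/- Let $A = k[s,x,y]$, let $m \geq 4$ with $\operatorname{char}(k) \nmid m$, $n = 2m+1$, $g = xy(x-y)(x+y-sy)$, and $f = \sum_{j=2}^{n-1} (-1)^j x^{n+1-j} y^j$. Then $x f \in (x^n, y^n, g)$ and $y f \in (x^n, y^n, g)$; that is, the maximal ideal $(s,x,y)$ is contained in the colon ideal $((x^n,y^n,g) : f)$. -/
open MvPolynomial

/-- Auxiliary sequence: `cpoly x y m b` is `∑_{t<b} (-1)^t x^(b-1-t) y^(2m-b+t)`,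
defined by the recursion `cpoly (b+1) = x^b y^(2m-1-b) - cpoly b`. -/
def cpoly {R : Type*} [CommRing R] (x y : R) (m : ℕ) : ℕ → R
  | 0 => 0
  | b + 1 => x ^ b * y ^ (2 * m - 1 - b) - cpoly x y m b

lemma cpoly_succ {R : Type*} [CommRing R] (x y : R) (m b : ℕ) :
    cpoly x y m (b + 1) = x ^ b * y ^ (2 * m - 1 - b) - cpoly x y m b := rfl

/-- Telescoping identity for `cpoly`. -/
lemma Tlem {R : Type*} [CommRing R] (x y : R) (m : ℕ) :
    ∀ b, b ≤ 2 * m →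
      (x + y) * cpoly x y m b = x ^ b * y ^ (2 * m - b) - (-1 : R) ^ b * y ^ (2 * m) := by
  intro b
  induction b with
  | zero => intro _; simp [cpoly]
  | succ b ih =>
    intro hb
    have ih' := ih (by omega)
    have h1 : 2 * m - b = (2 * m - 1 - b) + 1 := by omega
    have h2 : 2 * m - (b + 1) = 2 * m - 1 - b := by omega
    rw [h1] at ih'
    rw [cpoly_succ, h2, pow_succ (-1 : R) b]
    set t : R := (-1 : R) ^ b with ht
    linear_combination (-1 : R) * ih'

/-- The main induction: all monomials `x^b y^(2m-1-b)` multiplied by `e = x y² (x-y)`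
lie in the ideal `(x^(2m+1), y^(2m+1), g)`. -/
lemma Qlem {R : Type*} [CommRing R] (s x y g : R) (m : ℕ) (hm : 1 ≤ m)
    (hg : g = x * y * (x - y) * (x + y) - s * (x * y ^ 2 * (x - y))) :
    ∀ b, b ≤ 2 * m - 1 →
      x ^ b * y ^ (2 * m - 1 - b) * (x * y ^ 2 * (x - y)) ∈
        Ideal.span {x ^ (2 * m + 1), y ^ (2 * m + 1), g} ∧
      cpoly x y m b * (x * y ^ 2 * (x - y)) ∈
        Ideal.span {x ^ (2 * m + 1), y ^ (2 * m + 1), g} := by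
  have hIy : y ^ (2 * m + 1) ∈ Ideal.span {x ^ (2 * m + 1), y ^ (2 * m + 1), g} :=
    Ideal.subset_span (by simp)
  have hIg : g ∈ Ideal.span {x ^ (2 * m + 1), y ^ (2 * m + 1), g} :=
    Ideal.subset_span (by simp)
  intro b
  induction b with
  | zero =>
    intro _
    constructor
    · have hkey : (x : R) ^ 0 * y ^ (2 * m - 1 - 0) * (x * y ^ 2 * (x - y)) =
          (x * (x - y)) * y ^ (2 * m + 1) := by
        rw [show 2 * m + 1 = (2 * m - 1 - 0) + 2 by omega]
        ring
      rw [hkey]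
      exact Ideal.mul_mem_left _ _ hIy
    · show (0 : R) * _ ∈ _
      rw [zero_mul]
      exact Ideal.zero_mem _
  | succ b ih =>
    intro hb
    have ih' := ih (by omega)
    have hR : cpoly x y m (b + 1) * (x * y ^ 2 * (x - y)) ∈
        Ideal.span {x ^ (2 * m + 1), y ^ (2 * m + 1), g} := by
      rw [cpoly_succ, sub_mul]
      exact Ideal.sub_mem _ ih'.1 ih'.2
    refine ⟨?_, hR⟩
    have hT := Tlem x y m (b + 1) (by omega)
    have h1 : 2 * m - (b + 1) = (2 * m - 1 - (b + 1)) + 1 := by omega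
    have h2 : 2 * m + 1 = (2 * m) + 1 := rfl
    rw [h1] at hT
    have key : x ^ (b + 1) * y ^ (2 * m - 1 - (b + 1)) * (x * y ^ 2 * (x - y)) =
        g * cpoly x y m (b + 1) + s * (cpoly x y m (b + 1) * (x * y ^ 2 * (x - y))) +
          ((-1 : R) ^ b * (-1)) * (x * (x - y) * (y ^ (2 * m) * y)) := by
      rw [pow_succ (-1 : R) b] at hT
      set t : R := (-1 : R) ^ b with ht
      linear_combination (-(x * y * (x - y))) * hT - (cpoly x y m (b + 1)) * hg
    rw [key, ← pow_succ (-1 : R) b, ← pow_succ y (2 * m)]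
    refine Ideal.add_mem _ (Ideal.add_mem _ ?_ ?_) ?_
    · exact Ideal.mul_mem_right _ _ hIg
    · exact Ideal.mul_mem_left _ _ hR
    · exact Ideal.mul_mem_left _ _ (Ideal.mul_mem_left _ _ hIy)

/-- Geometric telescoping: `(x²-y²) ∑_{u=1}^{M} x^(2(m-u)) y^(2(u-1)) = x^(2m) - x^(2(m-M)) y^(2M)`. -/
lemma Glem {R : Type*} [CommRing R] (x y : R) (m : ℕ) :
    ∀ M, M ≤ m →
      (x ^ 2 - y ^ 2) * ∑ u ∈ Finset.Icc 1 M, x ^ (2 * (m - u)) * y ^ (2 * (u - 1)) =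
        x ^ (2 * m) - x ^ (2 * (m - M)) * y ^ (2 * M) := by
  intro M
  induction M with
  | zero =>
    intro _
    rw [show Finset.Icc 1 0 = (∅ : Finset ℕ) from by simp]
    simp
  | succ M ih =>
    intro hM
    have ih' := ih (by omega)
    rw [Finset.sum_Icc_succ_top (by omega : 1 ≤ M + 1)]
    have h1 : 2 * (m - M) = 2 * (m - (M + 1)) + 2 := by omega
    rw [h1] at ih'
    rw [show M + 1 - 1 = M from rfl]
    linear_combination ih'

/-- Splitting the alternating sum into even/odd parts with partial cutoff. -/
lemma Cl {R : Type*} [CommRing R] (x y : R) (m : ℕ) :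
    ∀ M, 1 ≤ M → M ≤ m →
      (∑ j ∈ Finset.Icc 2 (2 * M), (-1 : R) ^ j * x ^ (2 * m + 2 - j) * y ^ j) =
        (∑ u ∈ Finset.Icc 1 M, x ^ (2 * (m - u) + 2) * y ^ (2 * u)) -
          (∑ u ∈ Finset.Icc 1 M, x ^ (2 * (m - u) + 1) * y ^ (2 * u + 1)) +
            x ^ (2 * (m - M) + 1) * y ^ (2 * M + 1) := by
  intro M
  induction M with
  | zero => intro h _; omega
  | succ M ih =>
    intro _ hM1
    rcases Nat.eq_zero_or_pos M with h0 | hpos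
    · subst h0
      rw [show 2 * 1 = 2 from rfl, Finset.Icc_self, Finset.sum_singleton,
        Finset.Icc_self, Finset.sum_singleton, Finset.sum_singleton]
      rw [show 2 * m + 2 - 2 = 2 * (m - 1) + 2 from by omega]
      norm_num
    · have ih' := ih hpos (by omega)
      rw [show 2 * (M + 1) = (2 * M + 1) + 1 from by omega]
      rw [Finset.sum_Icc_succ_top (by omega : 2 ≤ 2 * M + 1 + 1)]
      rw [Finset.sum_Icc_succ_top (by omega : 2 ≤ 2 * M + 1)]
      rw [ih']
      rw [Finset.sum_Icc_succ_top (by omega : 1 ≤ M + 1),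
        Finset.sum_Icc_succ_top (by omega : 1 ≤ M + 1)]
      have e1 : ((-1 : R)) ^ (2 * M + 1) = -1 := Odd.neg_one_pow ⟨M, by ring⟩
      have e2 : ((-1 : R)) ^ (2 * M + 1 + 1) = 1 := Even.neg_one_pow ⟨M + 1, by ring⟩
      rw [e1, e2]
      rw [show 2 * m + 2 - (2 * M + 1) = 2 * (m - (M + 1)) + 3 from by omega,
        show 2 * m + 2 - (2 * M + 1 + 1) = 2 * (m - (M + 1)) + 2 from by omega,
        show 2 * (m - M) + 1 = 2 * (m - (M + 1)) + 3 from by omega]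
      ring

/-- Master identity: `f = P · (x y² (x-y)) + x yⁿ`. -/
lemma Flem {R : Type*} [CommRing R] (x y : R) (m n : ℕ) (hm : 1 ≤ m) (hn : n = 2 * m + 1) :
    (∑ j ∈ Finset.Icc 2 (n - 1), (-1 : R) ^ j * x ^ (n + 1 - j) * y ^ j) =
      (∑ u ∈ Finset.Icc 1 m, x ^ (2 * (m - u)) * y ^ (2 * (u - 1))) * (x * y ^ 2 * (x - y)) +
        x * y ^ n := by
  subst hn
  have h1 : 2 * m + 1 - 1 = 2 * m := by omega
  have h2 : ∀ j : ℕ, 2 * m + 1 + 1 - j = 2 * m + 2 - j := fun j => by omega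
  simp only [h1, h2]
  rw [Cl x y m m hm le_rfl]
  have h3 : (∑ u ∈ Finset.Icc 1 m, x ^ (2 * (m - u) + 2) * y ^ (2 * u)) -
      (∑ u ∈ Finset.Icc 1 m, x ^ (2 * (m - u) + 1) * y ^ (2 * u + 1)) =
      ∑ u ∈ Finset.Icc 1 m, x ^ (2 * (m - u)) * y ^ (2 * (u - 1)) * (x * y ^ 2 * (x - y)) := by
    rw [← Finset.sum_sub_distrib]
    refine Finset.sum_congr rfl ?_
    intro u hu
    have hu' := Finset.mem_Icc.mp hu
    rw [show 2 * u = 2 * (u - 1) + 2 from by omega]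
    ring
  rw [h3, Finset.sum_mul, show 2 * (m - m) + 1 = 1 from by omega, pow_one]

/-- With `A = k[s,x,y]`, `m ≥ 4`, `char k ∤ m`, `n = 2m+1`,
`g = xy(x-y)(x+y-sy)`, `f = ∑_{j=2}^{n-1} (-1)^j x^{n+1-j} y^j`, both `x·f` and `y·f`
lie in `(xⁿ, yⁿ, g)`; that is, the maximal ideal `(s,x,y)` is contained in the colon
ideal `((xⁿ,yⁿ,g) : f)`. -/
theorem stmt4 (k : Type*) [Field k]
    (s x y g f : MvPolynomial (Fin 3) k)
    (hs : s = X 0) (hx : x = X 1) (hy : y = X 2)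
    (m n : ℕ) (hm : 4 ≤ m) (hchar : ¬ (ringChar k ∣ m)) (hn : n = 2 * m + 1)
    (hg : g = x * y * (x - y) * (x + y - s * y))
    (hf : f = ∑ j ∈ Finset.Icc 2 (n - 1), (-1 : MvPolynomial (Fin 3) k) ^ j * x ^ (n + 1 - j) * y ^ j) :
    x * f ∈ Ideal.span {x ^ n, y ^ n, g} ∧ y * f ∈ Ideal.span {x ^ n, y ^ n, g} ∧
      Ideal.span {s, x, y} ≤ (Ideal.span {x ^ n, y ^ n, g}).colon (Ideal.span {f}) := by
  subst hn
  have hm1 : 1 ≤ m := by omega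
  set I : Ideal (MvPolynomial (Fin 3) k) := Ideal.span {x ^ (2 * m + 1), y ^ (2 * m + 1), g} with hI
  have hIx : x ^ (2 * m + 1) ∈ I := Ideal.subset_span (by simp)
  have hIy : y ^ (2 * m + 1) ∈ I := Ideal.subset_span (by simp)
  have hIg : g ∈ I := Ideal.subset_span (by simp)
  have hgE : g = x * y * (x - y) * (x + y) - s * (x * y ^ 2 * (x - y)) := by
    rw [hg]; ring
  have hQ : ∀ b, b ≤ 2 * m - 1 →
      x ^ b * y ^ (2 * m - 1 - b) * (x * y ^ 2 * (x - y)) ∈ I :=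
    fun b hb => (Qlem s x y g m hm1 hgE b hb).1
  have hfP : f = (∑ u ∈ Finset.Icc 1 m, x ^ (2 * (m - u)) * y ^ (2 * (u - 1))) *
      (x * y ^ 2 * (x - y)) + x * y ^ (2 * m + 1) := by
    rw [hf]; exact Flem x y m (2 * m + 1) hm1 rfl
  have hPh : (∑ u ∈ Finset.Icc 1 m, x ^ (2 * (m - u)) * y ^ (2 * (u - 1))) *
      (x * y * (x - y) * (x + y)) = x ^ (2 * m + 1) * y - x * y ^ (2 * m + 1) := by
    have hG := Glem x y m m le_rfl
    rw [show 2 * (m - m) = 0 from by omega, pow_zero, one_mul] at hG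
    linear_combination (x * y) * hG
  -- y * f ∈ I
  have hyf : y * f ∈ I := by
    rw [hfP, mul_add]
    refine Ideal.add_mem _ ?_ ?_
    · rw [Finset.sum_mul, Finset.mul_sum]
      refine Ideal.sum_mem _ fun u hu => ?_
      have hu' := Finset.mem_Icc.mp hu
      have hQu := hQ (2 * (m - u)) (by omega)
      have heq : y * (x ^ (2 * (m - u)) * y ^ (2 * (u - 1)) * (x * y ^ 2 * (x - y))) =
          x ^ (2 * (m - u)) * y ^ (2 * m - 1 - 2 * (m - u)) * (x * y ^ 2 * (x - y)) := by
        rw [show 2 * m - 1 - 2 * (m - u) = 2 * (u - 1) + 1 from by omega]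
        ring
      rw [heq]
      exact hQu
    · rw [show y * (x * y ^ (2 * m + 1)) = (y * x) * y ^ (2 * m + 1) from by ring]
      exact Ideal.mul_mem_left _ _ hIy
  -- x * f ∈ I
  have hxf : x * f ∈ I := by
    rw [hfP, mul_add]
    refine Ideal.add_mem _ ?_ ?_
    · rw [Finset.sum_mul, Finset.mul_sum]
      refine Ideal.sum_mem _ fun u hu => ?_
      have hu' := Finset.mem_Icc.mp hu
      have hQu := hQ (2 * (m - u) + 1) (by omega)
      have heq : x * (x ^ (2 * (m - u)) * y ^ (2 * (u - 1)) * (x * y ^ 2 * (x - y))) =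
          x ^ (2 * (m - u) + 1) * y ^ (2 * m - 1 - (2 * (m - u) + 1)) * (x * y ^ 2 * (x - y)) := by
        rw [show 2 * m - 1 - (2 * (m - u) + 1) = 2 * (u - 1) from by omega]
        ring
      rw [heq]
      exact hQu
    · rw [show x * (x * y ^ (2 * m + 1)) = (x * x) * y ^ (2 * m + 1) from by ring]
      exact Ideal.mul_mem_left _ _ hIy
  -- s * f ∈ I
  have hsf : s * f ∈ I := by
    rw [hfP]
    have expand : s * ((∑ u ∈ Finset.Icc 1 m, x ^ (2 * (m - u)) * y ^ (2 * (u - 1))) *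
        (x * y ^ 2 * (x - y)) + x * y ^ (2 * m + 1)) =
        (∑ u ∈ Finset.Icc 1 m, x ^ (2 * (m - u)) * y ^ (2 * (u - 1))) *
          (x * y * (x - y) * (x + y)) -
        (∑ u ∈ Finset.Icc 1 m, x ^ (2 * (m - u)) * y ^ (2 * (u - 1))) * g +
        (s * x) * y ^ (2 * m + 1) := by
      rw [hgE]; ring
    rw [expand, hPh]
    refine Ideal.add_mem _ (Ideal.sub_mem _ (Ideal.sub_mem _ ?_ ?_) ?_) ?_
    · exact Ideal.mul_mem_right _ _ hIx
    · exact Ideal.mul_mem_left _ _ hIy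
    · exact Ideal.mul_mem_left _ _ hIg
    · exact Ideal.mul_mem_left _ _ hIy
  refine ⟨hxf, hyf, ?_⟩
  rw [Ideal.span_le]
  intro z hz
  simp only [Set.mem_insert_iff, Set.mem_singleton_iff] at hz
  rcases hz with rfl | rfl | rfl
  · exact Ideal.mem_colon_span_singleton.mpr hsf
  · exact Ideal.mem_colon_span_singleton.mpr hxf
  · exact Ideal.mem_colon_span_singleton.mpr hyf
end

section
/- Let $A = k[s,x,y]$, $m \geq 4$, $n = 2m+1$, $g = xy(x-y)(x+y-sy)$, and $f = \sum_{j=2}^{n-1}(-1)^j x^{n+1-j} y^j$. Then $f \notin (x^n, y^n, g)$. -/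
open MvPolynomial

/-!
Everything is homogeneous in `x, y`, so only the part of `(x, y)`-degree `n + 1` matters. Put
`q = s - 1`, so that `g = x y (x - y) (x - q y)`, and `G r = 1 + q + ⋯ + q ^ (r - 1)`. The
`k[s]`-linear map sending `s ^ a x ^ (n + 1 - c) y ^ c` to `(q + 1) ^ a G (n - c)` for `c ≥ 1`
(and every other monomial to `0`) carries the ideal into `(G (n - 1))`: multiples of `x ^ n` go to
`0` or `G (n - 1)`, multiples of `y ^ n` to `G 0 = 0`, and multiples of `g` to multiples of
`G (r + 2) - (q + 1) G (r + 1) + q G r = 0`. It sends `f` to `∑ (-1) ^ j G (n - j)`, a polynomial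
of degree `n - 3 < n - 2 = deg G (n - 1)`, so `f` is not in the ideal. (The map is in fact an
isomorphism from the degree-`(n + 1)` part of `A / (x ^ n, y ^ n, g)` onto `k[q] / (G (n - 1))`.)
-/

namespace SliceWeight

open Finset

variable {k : Type*} [Field k]

noncomputable def geomSumX (k : Type*) [Field k] (r : ℕ) : Polynomial k :=
  ∑ i ∈ range r, Polynomial.X ^ i

lemma geomSumX_recurrence (r : ℕ) :
    geomSumX k (r + 2) - (Polynomial.X + 1) * geomSumX k (r + 1) + Polynomial.X * geomSumX k r =
      0 := by
  simp only [geomSumX, geom_sum_succ]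
  ring

lemma coeff_geomSumX (r d : ℕ) : (geomSumX k r).coeff d = if d < r then 1 else 0 := by
  simp [geomSumX, Polynomial.coeff_X_pow]

-- `Polynomial.X` is `q = s - 1`; this is the image of `s ^ a x ^ b y ^ c`.
noncomputable def weight (k : Type*) [Field k] (n a b c : ℕ) : Polynomial k :=
  if b + c = n + 1 ∧ c ≠ 0 then (Polynomial.X + 1) ^ a * geomSumX k (n - c) else 0

noncomputable def weightMap (k : Type*) [Field k] (n : ℕ) :
    MvPolynomial (Fin 3) k →ₗ[k] Polynomial k :=
  (basisMonomials (Fin 3) k).constr k fun e => weight k n (e 0) (e 1) (e 2)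

variable (n : ℕ)

lemma weightMap_monomial (e : Fin 3 →₀ ℕ) (c : k) :
    weightMap k n (monomial e c) = c • weight k n (e 0) (e 1) (e 2) := by
  rw [← mul_one c, ← smul_eq_mul, ← smul_monomial, map_smul, smul_eq_mul, mul_one]
  exact congrArg (c • ·) ((basisMonomials (Fin 3) k).constr_basis k _ e)

lemma weightMap_monomial_mul (e : Fin 3 →₀ ℕ) (c : k) (a b d : ℕ) :
    weightMap k n (monomial e c * (X 0 ^ a * X 1 ^ b * X 2 ^ d)) =
      c • weight k n (e 0 + a) (e 1 + b) (e 2 + d) := by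
  simp only [X_pow_eq_monomial, monomial_mul, mul_one, weightMap_monomial]
  simp

lemma weight_eq_zero_of_le {a b c : ℕ} (hc : n ≤ c) : weight k n a b c = 0 := by
  simp [weight, geomSumX, Nat.sub_eq_zero_of_le hc]

lemma weightMap_monomial_mul_X_one_pow_mem (e : Fin 3 →₀ ℕ) :
    weightMap k n (monomial e 1 * X 1 ^ n) ∈ Ideal.span {geomSumX k (n - 1)} := by
  have h := weightMap_monomial_mul n e (1 : k) 0 n 0
  simp only [pow_zero, one_mul, mul_one, add_zero, one_smul] at h
  rw [h, weight]
  split_ifs with hdeg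
  · rw [show e 2 = 1 by omega]
    exact Ideal.mul_mem_left _ _ (Ideal.mem_span_singleton_self _)
  · exact zero_mem _

lemma weightMap_monomial_mul_X_two_pow (e : Fin 3 →₀ ℕ) :
    weightMap k n (monomial e 1 * X 2 ^ n) = 0 := by
  have h := weightMap_monomial_mul n e (1 : k) 0 0 n
  simp only [pow_zero, one_mul, add_zero, one_smul] at h
  rw [h, weight_eq_zero_of_le n (by omega)]

lemma weightMap_monomial_mul_quartic (e : Fin 3 →₀ ℕ) :
    weightMap k n (monomial e 1 * (X 1 * X 2 * (X 1 - X 2) * (X 1 + X 2 - X 0 * X 2))) = 0 := by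
  have hexpand : monomial e (1 : k) * (X 1 * X 2 * (X 1 - X 2) * (X 1 + X 2 - X 0 * X 2)) =
      monomial e 1 * (X 0 ^ 0 * X 1 ^ 3 * X 2 ^ 1) - monomial e 1 * (X 0 ^ 1 * X 1 ^ 2 * X 2 ^ 2)
        + monomial e 1 * (X 0 ^ 1 * X 1 ^ 1 * X 2 ^ 3)
        - monomial e 1 * (X 0 ^ 0 * X 1 ^ 1 * X 2 ^ 3) := by
    ring
  simp only [hexpand, map_add, map_sub, weightMap_monomial_mul, one_smul, weight]
  by_cases hdeg : e 1 + e 2 + 4 = n + 1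
  · rw [if_pos (by omega), if_pos (by omega), if_pos (by omega), if_pos (by omega),
      show n - (e 2 + 1) = e 1 + 2 by omega, show n - (e 2 + 2) = e 1 + 1 by omega,
      show n - (e 2 + 3) = e 1 by omega]
    linear_combination (Polynomial.X + 1) ^ e 0 * geomSumX_recurrence (k := k) (e 1)
  · rw [if_neg (by omega), if_neg (by omega), if_neg (by omega), if_neg (by omega)]
    simp

lemma weightMap_mem_of_mem_ideal {p : MvPolynomial (Fin 3) k}
    (hp : p ∈ Ideal.span {X 1 ^ n, X 2 ^ n, X 1 * X 2 * (X 1 - X 2) * (X 1 + X 2 - X 0 * X 2)}) :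
    weightMap k n p ∈ Ideal.span {geomSumX k (n - 1)} := by
  have hspan :
      Submodule.span k (Set.range fun e : Fin 3 →₀ ℕ => monomial e (1 : k)) = ⊤ := by
    rw [← coe_basisMonomials]
    exact (basisMonomials _ k).span_eq
  rw [Ideal.span, ← Submodule.restrictScalars_mem k,
    ← Submodule.span_smul_of_span_eq_top hspan] at hp
  refine (Submodule.span_le (p := (Ideal.span {geomSumX k (n - 1)}).restrictScalars k |>.comap
    (weightMap k n))).mpr ?_ hp
  rintro _ ⟨_, ⟨e, rfl⟩, q, hq, rfl⟩
  simp only [Set.mem_insert_iff, Set.mem_singleton_iff] at hq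
  simp only [SetLike.mem_coe, Submodule.mem_comap, Submodule.restrictScalars_mem, smul_eq_mul]
  rcases hq with rfl | rfl | rfl
  · exact weightMap_monomial_mul_X_one_pow_mem n e
  · rw [weightMap_monomial_mul_X_two_pow]
    exact zero_mem _
  · rw [weightMap_monomial_mul_quartic]
    exact zero_mem _

lemma weightMap_alternating_sum :
    weightMap k n (∑ j ∈ Icc 2 (n - 1),
        (-1 : MvPolynomial (Fin 3) k) ^ j * X 1 ^ (n + 1 - j) * X 2 ^ j) =
      ∑ j ∈ Icc 2 (n - 1), (-1 : k) ^ j • geomSumX k (n - j) := by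
  rw [map_sum]
  refine sum_congr rfl fun j hj => ?_
  rw [mem_Icc] at hj
  have h := weightMap_monomial_mul n 0 ((-1 : k) ^ j) 0 (n + 1 - j) j
  rw [← C_apply, map_pow, map_neg, map_one, pow_zero, one_mul, ← mul_assoc] at h
  rw [h, weight, if_pos (by simp only [Finsupp.coe_zero, Pi.zero_apply, zero_add]; omega)]
  simp

lemma alternating_sum_geomSumX_not_mem (hn : 3 ≤ n) :
    ∑ j ∈ Icc 2 (n - 1), (-1 : k) ^ j • geomSumX k (n - j) ∉
      Ideal.span {geomSumX k (n - 1)} := by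
  set F := ∑ j ∈ Icc 2 (n - 1), (-1 : k) ^ j • geomSumX k (n - j)
  have hcoeff (d : ℕ) :
      F.coeff d = ∑ j ∈ Icc 2 (n - 1), (-1 : k) ^ j * if d < n - j then 1 else 0 := by
    simp [F, Polynomial.finsetSum_coeff, coeff_geomSumX]
  have hF : F ≠ 0 := by
    intro h
    have := hcoeff (n - 3)
    rw [h, Polynomial.coeff_zero, sum_eq_single 2] at this
    · simp [show n - 3 < n - 2 by omega] at this
    · intro j hj hj2
      rw [mem_Icc] at hj
      rw [if_neg (by omega), mul_zero]
    · exact fun h2 => absurd (mem_Icc.mpr ⟨le_rfl, by omega⟩) h2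
  have hdeg : F.degree < (geomSumX k (n - 1)).degree :=
    calc F.degree < (n - 2 : ℕ) := (Polynomial.degree_lt_iff_coeff_zero _ _).mpr fun d hd => by
          rw [hcoeff]
          exact sum_eq_zero fun j hj => by rw [mem_Icc] at hj; rw [if_neg (by omega), mul_zero]
      _ ≤ _ := Polynomial.le_degree_of_ne_zero <| by
          rw [coeff_geomSumX, if_pos (by omega)]
          exact one_ne_zero
  rw [Ideal.mem_span_singleton]
  exact fun hdvd => hF (Polynomial.eq_zero_of_dvd_of_degree_lt hdvd hdeg)

end SliceWeight

open SliceWeight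

/-- With `A = k[s,x,y]`, `m ≥ 4`, `n = 2m+1`, `g = xy(x-y)(x+y-sy)`,
and `f = ∑_{j=2}^{n-1} (-1)^j x^{n+1-j} y^j`, we have `f ∉ (xⁿ, yⁿ, g)`. -/
theorem stmt5 (k : Type*) [Field k]
    (s x y g f : MvPolynomial (Fin 3) k)
    (hs : s = X 0) (hx : x = X 1) (hy : y = X 2)
    (m n : ℕ) (hm : 4 ≤ m) (hn : n = 2 * m + 1)
    (hg : g = x * y * (x - y) * (x + y - s * y))
    (hf : f = ∑ j ∈ Finset.Icc 2 (n - 1), (-1 : MvPolynomial (Fin 3) k) ^ j * x ^ (n + 1 - j) * y ^ j) :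
    f ∉ Ideal.span {x ^ n, y ^ n, g} := by
  subst hs hx hy hg hf
  intro hmem
  have himage := weightMap_mem_of_mem_ideal n hmem
  rw [weightMap_alternating_sum] at himage
  exact alternating_sum_geomSumX_not_mem n (by omega) himage
end

section
/- Let $L$ be a field, $C = L[x,y]$, and let $p$ be an odd prime and $q$ a power of $p$ with $q \geq p$. Then $x^q y^{(p-1)q} \notin (x^{pq}, y^{pq}, xy(x-y))$ in $C$. -/
open MvPolynomial

/-- Let `C = L[x,y]`, `p` an odd prime, `q` a power of `p` with `q ≥ p`.
Then `x^q y^{(p-1)q} ∉ (x^{pq}, y^{pq}, xy(x-y))` in `C`. -/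
theorem stmt6 (L : Type*) [Field L]
    (x y : MvPolynomial (Fin 2) L)
    (hx : x = X 0) (hy : y = X 1)
    (p q : ℕ) (hp : p.Prime) (hodd : Odd p)
    (hq : ∃ e : ℕ, 1 ≤ e ∧ q = p ^ e) :
    x ^ q * y ^ ((p - 1) * q) ∉
      Ideal.span {x ^ (p * q), y ^ (p * q), x * y * (x - y)} := by
  subst hx hy
  intro h
  obtain ⟨e, he, rfl⟩ := hq
  have hq0 : p ^ e ≠ 0 := pow_ne_zero _ hp.pos.ne'
  set q := p ^ e with hqdef
  obtain ⟨p', rfl⟩ : ∃ p', p = p' + 1 := ⟨p - 1, by have := hp.two_le; omega⟩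
  have hp1 : 1 ≤ p' := by
    have := hp.two_le; omega
  have hsub : (p' + 1 - 1) * q = p' * q := by simp
  have hexp : q + p' * q = (p' + 1) * q := by ring
  rw [Ideal.mem_span_insert] at h
  obtain ⟨a, z, hz, hrep⟩ := h
  rw [Ideal.mem_span_insert] at hz
  obtain ⟨b, w, hw, rfl⟩ := hz
  rw [Ideal.mem_span_singleton'] at hw
  obtain ⟨c, rfl⟩ := hw
  -- three evaluation maps into L[t]
  set T : MvPolynomial (Fin 2) L →ₐ[L] Polynomial L := aeval (fun _ => Polynomial.X) with hT
  set S : MvPolynomial (Fin 2) L →ₐ[L] Polynomial L :=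
    aeval (fun i => if i = 0 then Polynomial.X else 0) with hS
  set S' : MvPolynomial (Fin 2) L →ₐ[L] Polynomial L :=
    aeval (fun i => if i = 1 then Polynomial.X else 0) with hS'
  have hXne : (Polynomial.X : Polynomial L) ^ ((p' + 1) * q) ≠ 0 :=
    pow_ne_zero _ Polynomial.X_ne_zero
  -- apply T
  have h1 := congrArg T hrep
  simp only [map_add, map_mul, map_pow, map_sub, hT, aeval_X, sub_self, mul_zero, add_zero,
    hsub] at h1
  rw [← pow_add, hexp, ← hT] at h1
  have hkey : T a + T b = 1 :=
    mul_right_cancel₀ hXne (by rw [add_mul, one_mul]; exact h1.symm)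
  -- apply S
  have h2 := congrArg S hrep
  simp only [map_add, map_mul, map_pow, map_sub, hS, aeval_X, if_pos, if_neg,
    hsub] at h2
  have hpq0 : p' * q ≠ 0 := by positivity
  rw [show (if (1:Fin 2) = 0 then Polynomial.X else (0:Polynomial L)) = 0 from if_neg (by decide)] at h2
  simp only [zero_pow hpq0, zero_pow (show (p'+1)*q ≠ 0 by positivity), mul_zero, zero_mul,
    add_zero, sub_zero, ← hS] at h2
  have hSa : S a = 0 := by
    rcases mul_eq_zero.mp h2.symm with h | h
    · exact h
    · exact absurd h hXne
  -- apply S'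
  have h3 := congrArg S' hrep
  simp only [map_add, map_mul, map_pow, map_sub, hS', aeval_X] at h3
  rw [show (if (0:Fin 2) = 1 then Polynomial.X else (0:Polynomial L)) = 0 from if_neg (by decide)] at h3
  simp only [if_true] at h3
  simp only [zero_pow (show q ≠ 0 from hq0), zero_pow (show (p'+1)*q ≠ 0 by positivity),
    mul_zero, zero_mul, add_zero, zero_add, zero_sub, mul_neg, neg_zero, hsub, ← hS'] at h3
  have hSb : S' b = 0 := by
    rcases mul_eq_zero.mp h3.symm with h | h
    · exact h
    · exact absurd h hXne
  -- constant coefficients agree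
  have hcomp : ∀ f : MvPolynomial (Fin 2) L,
      Polynomial.eval 0 (T f) = Polynomial.eval 0 (S f) := by
    intro f
    induction f using MvPolynomial.induction_on with
    | C r => simp [hT, hS]
    | add f g hf hg => simp [map_add, hf, hg]
    | mul_X f i hf =>
      fin_cases i <;> simp [map_mul, hT, hS]
  have hcomp' : ∀ f : MvPolynomial (Fin 2) L,
      Polynomial.eval 0 (T f) = Polynomial.eval 0 (S' f) := by
    intro f
    induction f using MvPolynomial.induction_on with
    | C r => simp [hT, hS']
    | add f g hf hg => simp [map_add, hf, hg]
    | mul_X f i hf =>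
      fin_cases i <;> simp [map_mul, hT, hS']
  have hfin := congrArg (Polynomial.eval 0) hkey
  rw [Polynomial.eval_add, hcomp a, hcomp' b, hSa, hSb] at hfin
  simp at hfin
end

section
/- Let $p$ be an odd prime, $k$ a field of characteristic $p$, $R = k[s,x,y]/(xy(x-y)(x+y-sy))$, and $q$ a power of $p$. Then for every $j$ with $2 \leq j \leq pq-1$, the image of $x^j y^{pq+1-j}$ in $R$ lies in the ideal $(x^q, y^q)^p R$. -/
open MvPolynomial

/-!
Write `t = s - 1`. Modulo `g` one has `x³y - x²y² = t (x²y² - xy³)`, so sliding a power of `x`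
into `y` along the differences `x^(i+2) y^(b+1) - x^(i+1) y^(b+2)` costs a factor `t` per step.
Telescoping, every `x^j y^(N+1-j)` with `N = pq` is `xy^N ∈ I = (x^q, y^q)^p` plus a multiple of
`w = x²y^(N-1) - xy^N`. For `w` itself: sliding from `x^(q+1) y^(N-q)` gives `t^(q-1) w ∈ I` and
telescoping from `x^q y^(N-q+1)` gives `(1 + t + ⋯ + t^(q-2)) w ∈ I`; since
`t^(q-1) - 1 = (t - 1)(1 + ⋯ + t^(q-2))`, these two combine to `w ∈ I`.
-/

theorem pow_mul_pow_mem_span_pair_pow {R : Type*} [CommSemiring R] (x y : R) {p q a b : ℕ}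
    (c d : ℕ) (hcd : c + d = p) (ha : c * q ≤ a) (hb : d * q ≤ b) :
    x ^ a * y ^ b ∈ Ideal.span {x ^ q, y ^ q} ^ p := by
  obtain ⟨a', rfl⟩ := Nat.exists_eq_add_of_le ha
  obtain ⟨b', rfl⟩ := Nat.exists_eq_add_of_le hb
  have hxq : x ^ q ∈ Ideal.span {x ^ q, y ^ q} := Ideal.subset_span (by simp)
  have hyq : y ^ q ∈ Ideal.span {x ^ q, y ^ q} := Ideal.subset_span (by simp)
  rw [← hcd, pow_add]
  convert Ideal.mul_mem_right (x ^ a' * y ^ b') _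
    (Ideal.mul_mem_mul (Ideal.pow_mem_pow hxq c) (Ideal.pow_mem_pow hyq d)) using 1
  ring

theorem mul_pow_mul_mem_span_pair_pow {R : Type*} [CommSemiring R] (x y : R) (p q : ℕ) :
    x * y ^ (p * q) ∈ Ideal.span {x ^ q, y ^ q} ^ p := by
  simpa using pow_mul_pow_mem_span_pair_pow x y (a := 1) 0 p (by omega) (by omega) (by omega)

theorem mem_of_pow_mul_mem_of_geom_sum_mul_mem {R : Type*} [CommRing R] {I : Ideal R}
    {t w : R} (n : ℕ) (hpow : t ^ n * w ∈ I) (hgeom : (∑ i ∈ Finset.range n, t ^ i) * w ∈ I) :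
    w ∈ I := by
  have hw : w = t ^ n * w - (t - 1) * ((∑ i ∈ Finset.range n, t ^ i) * w) := by
    linear_combination w * geom_sum_mul t n
  rw [hw]
  exact sub_mem hpow (I.mul_mem_left _ hgeom)

section

variable {R : Type*} [CommRing R] {x y t : R}

theorem pow_mul_pow_sub_eq_pow_mul (h : x ^ 3 * y - x ^ 2 * y ^ 2 = t * (x ^ 2 * y ^ 2 - x * y ^ 3))
    (i b : ℕ) :
    x ^ (i + 2) * y ^ (b + 1) - x ^ (i + 1) * y ^ (b + 2) =
      t ^ i * (x ^ 2 * y ^ (b + i + 1) - x * y ^ (b + i + 2)) := by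
  induction i generalizing b with
  | zero => ring
  | succ i ih => linear_combination x ^ i * y ^ b * h + t * ih (b + 1)

theorem pow_mul_pow_sub_eq_geom_sum_mul
    (h : x ^ 3 * y - x ^ 2 * y ^ 2 = t * (x ^ 2 * y ^ 2 - x * y ^ 3)) (i b : ℕ) :
    x ^ (i + 1) * y ^ (b + 1) - x * y ^ (b + i + 1) =
      (∑ m ∈ Finset.range i, t ^ m) * (x ^ 2 * y ^ (b + i) - x * y ^ (b + i + 1)) := by
  induction i generalizing b with
  | zero => simp
  | succ i ih =>
    rw [Finset.sum_range_succ]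
    linear_combination pow_mul_pow_sub_eq_pow_mul h i b + ih (b + 1)

variable {p q : ℕ}

theorem sq_mul_pow_sub_mem_span_pair_pow
    (h : x ^ 3 * y - x ^ 2 * y ^ 2 = t * (x ^ 2 * y ^ 2 - x * y ^ 3)) (hp : 2 ≤ p) (hq : 1 ≤ q) :
    x ^ 2 * y ^ (p * q - 1) - x * y ^ (p * q) ∈ Ideal.span {x ^ q, y ^ q} ^ p := by
  obtain ⟨n, rfl⟩ : ∃ n, q = n + 1 := ⟨q - 1, by omega⟩
  obtain ⟨b, hb⟩ : ∃ b, (p - 1) * (n + 1) = b + 1 :=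
    ⟨(p - 1) * (n + 1) - 1, by have := Nat.mul_le_mul (show 1 ≤ p - 1 by omega) hq; omega⟩
  have hN : p * (n + 1) = b + n + 2 := by
    rw [show p = p - 1 + 1 by omega, add_mul, hb]; ring
  have hA : x ^ (n + 2) * y ^ (b + 1) ∈ Ideal.span {x ^ (n + 1), y ^ (n + 1)} ^ p :=
    pow_mul_pow_mem_span_pair_pow x y 1 (p - 1) (by omega) (by omega) (by omega)
  have hB : x ^ (n + 1) * y ^ (b + 2) ∈ Ideal.span {x ^ (n + 1), y ^ (n + 1)} ^ p :=
    pow_mul_pow_mem_span_pair_pow x y 1 (p - 1) (by omega) (by omega) (by omega)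
  have hC := hN ▸ mul_pow_mul_mem_span_pair_pow x y p (n + 1)
  rw [hN, show b + n + 2 - 1 = b + n + 1 by omega]
  apply mem_of_pow_mul_mem_of_geom_sum_mul_mem (t := t) n
  · convert sub_mem hA hB using 1
    exact (pow_mul_pow_sub_eq_pow_mul h n b).symm
  · convert sub_mem hB hC using 1
    linear_combination -pow_mul_pow_sub_eq_geom_sum_mul h n (b + 1)

theorem pow_mul_pow_mem_span_pair_pow_of_sub_eq
    (h : x ^ 3 * y - x ^ 2 * y ^ 2 = t * (x ^ 2 * y ^ 2 - x * y ^ 3)) (hp : 2 ≤ p) {j : ℕ}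
    (hj : 2 ≤ j) (hjN : j ≤ p * q - 1) :
    x ^ j * y ^ (p * q + 1 - j) ∈ Ideal.span {x ^ q, y ^ q} ^ p := by
  have hq : 1 ≤ q := Nat.pos_of_ne_zero fun hq ↦ by simp [hq] at hjN; omega
  obtain ⟨i, rfl⟩ : ∃ i, j = i + 1 := ⟨j - 1, by omega⟩
  obtain ⟨b, hb⟩ : ∃ b, p * q = b + i + 1 := ⟨p * q - (i + 1), by omega⟩
  have hw := sq_mul_pow_sub_mem_span_pair_pow h hp hq
  rw [hb, show b + i + 1 - 1 = b + i by omega] at hw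
  have hxy := hb ▸ mul_pow_mul_mem_span_pair_pow x y p q
  rw [hb, show b + i + 1 + 1 - (i + 1) = b + 1 by omega]
  convert add_mem (Ideal.mul_mem_left _ (∑ m ∈ Finset.range i, t ^ m) hw) hxy using 1
  linear_combination pow_mul_pow_sub_eq_geom_sum_mul h i b

end

theorem stmt7_general (p : ℕ) (hp : p.Prime)
    (k : Type*) [Field k]
    (s x y g : MvPolynomial (Fin 3) k)
    (hg : g = x * y * (x - y) * (x + y - s * y))
    (q : ℕ) :
    ∀ j : ℕ, 2 ≤ j → j ≤ p * q - 1 →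
      Ideal.Quotient.mk (Ideal.span {g}) (x ^ j * y ^ (p * q + 1 - j)) ∈
        (Ideal.span {Ideal.Quotient.mk (Ideal.span {g}) (x ^ q),
                     Ideal.Quotient.mk (Ideal.span {g}) (y ^ q)}) ^ p := by
  intro j hj hjN
  set π := Ideal.Quotient.mk (Ideal.span {g})
  have hπg : π (x * y * (x - y) * (x + y - s * y)) = 0 := by
    rw [← hg]
    exact Ideal.Quotient.eq_zero_iff_mem.mpr (Ideal.mem_span_singleton_self g)
  have h : π x ^ 3 * π y - π x ^ 2 * π y ^ 2 =
      (π s - 1) * (π x ^ 2 * π y ^ 2 - π x * π y ^ 3) := by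
    simp only [map_mul, map_sub, map_add] at hπg
    linear_combination hπg
  simpa only [map_mul, map_pow] using
    pow_mul_pow_mem_span_pair_pow_of_sub_eq h hp.two_le hj hjN

/-- Let `p` be an odd prime, `k` a field of characteristic `p`,
`R = k[s,x,y]/(xy(x-y)(x+y-sy))`, and `q` a power of `p`.  Then for every `j` with
`2 ≤ j ≤ pq-1`, the image of `x^j y^{pq+1-j}` in `R` lies in `(x^q, y^q)^p R`. -/
theorem stmt7 (p : ℕ) (hp : p.Prime) (hodd : Odd p)
    (k : Type*) [Field k] [CharP k p]
    (s x y g : MvPolynomial (Fin 3) k)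
    (hs : s = X 0) (hx : x = X 1) (hy : y = X 2)
    (hg : g = x * y * (x - y) * (x + y - s * y))
    (q : ℕ) (hq : ∃ e : ℕ, q = p ^ e) :
    ∀ j : ℕ, 2 ≤ j → j ≤ p * q - 1 →
      Ideal.Quotient.mk (Ideal.span {g}) (x ^ j * y ^ (p * q + 1 - j)) ∈
        (Ideal.span {Ideal.Quotient.mk (Ideal.span {g}) (x ^ q),
                     Ideal.Quotient.mk (Ideal.span {g}) (y ^ q)}) ^ p :=
  stmt7_general p hp k s x y g hg q
end

section
/- Let $(R,\mathfrak{m})$ be a Noetherian local ring of prime characteristic $p$ possessing a $q_0$-weak test element $c$, and let $L \subseteq M \subseteq N$ be finitely generated $R$-modules. If $M \subseteq (L + \mathfrak{m}M)^*_N$, then $M \subseteq (L + \mathfrak{m}^r M)^*_N$ for every $r \geq 1$, and consequently $M \subseteq L^*_N$. -/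
/-! Since `c M^{[q]} ⊆ (L + 𝔪M)^{[q]}`, multiplying by `a ∈ 𝔪ʳ` gives
`c (𝔪ʳM)^{[q]} ⊆ (L + 𝔪ʳ⁺¹M)^{[q]}`; so if `c z^q ∈ (L + 𝔪ʳM)^{[q]}` then
`c² z^q ∈ (L + 𝔪ʳ⁺¹M)^{[q]}`, and since `c` is a test element, induction on `r` gives
`M ⊆ (L + 𝔪ʳM)^*`. Hence `c z^q ∈ L^{[q]} + 𝔪ʳ Fᵉ(N)` for every `r`, and Krull's intersection
theorem in the finitely generated module `Fᵉ(N)/L^{[q]}` gives `c z^q ∈ L^{[q]}`. -/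

open TensorProduct

universe u

/-- Type synonym: `R` viewed as an `R`-algebra via the `e`-th iterated Frobenius
`r ↦ r^{pᵉ}`; this is Frobenius pushforward `{}^e R`. -/
def FrobAlg (R : Type u) (_p _e : ℕ) : Type u := R

section FrobDefs

variable (R : Type u) [CommRing R] (p : ℕ) [Fact p.Prime] [CharP R p] (e : ℕ)

instance : CommRing (FrobAlg R p e) := inferInstanceAs (CommRing R)
instance : CharP (FrobAlg R p e) p := inferInstanceAs (CharP R p)

/-- The structure map `R →+* FrobAlg R p e`, i.e. the `e`-th iterated Frobenius. -/
def frobAlgMap : R →+* FrobAlg R p e := iterateFrobenius R p e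

noncomputable instance : Algebra R (FrobAlg R p e) := (frobAlgMap R p e).toAlgebra

/-- An element of `R`, viewed in `FrobAlg R p e` (as the same element). -/
def toFrobAlg (r : R) : FrobAlg R p e := r

/-- The Frobenius functor: `Fᵉ(M) = {}^e R ⊗_R M`, a module over `FrobAlg R p e`
(whose underlying ring is `R`). -/
def FrobM (M : Type u) [AddCommGroup M] [Module R M] : Type u :=
  TensorProduct R (FrobAlg R p e) M

variable (M : Type u) [AddCommGroup M] [Module R M]

noncomputable instance : AddCommGroup (FrobM R p e M) :=
  inferInstanceAs (AddCommGroup (TensorProduct R (FrobAlg R p e) M))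

noncomputable instance : Module (FrobAlg R p e) (FrobM R p e M) :=
  inferInstanceAs (Module (FrobAlg R p e) (TensorProduct R (FrobAlg R p e) M))

variable {M}

/-- `z^q_M`: the image `1 ⊗ z` of `z` under `M → Fᵉ(M)`. -/
noncomputable def frobPow (z : M) : FrobM R p e M := (1 : FrobAlg R p e) ⊗ₜ[R] z

/-- `L^{[q]}_M`: the image of `Fᵉ(L) → Fᵉ(M)` for a submodule `L ⊆ M`. -/
noncomputable def frobBracket (L : Submodule R M) : Submodule (FrobAlg R p e) (FrobM R p e M) :=
  LinearMap.range (LinearMap.baseChange (FrobAlg R p e) L.subtype)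

end FrobDefs

section TC

variable {R : Type u} [CommRing R] (p : ℕ) [Fact p.Prime] [CharP R p]

/-- `R°`: the set of elements not in any minimal prime of `R`. -/
def ringCirc (R : Type u) [CommRing R] : Set R :=
  {c | ∀ P ∈ minimalPrimes R, c ∉ P}

variable {M : Type u} [AddCommGroup M] [Module R M]

/-- The tight closure `L^*_M` of a submodule `L ⊆ M`. -/
def tightClosure (L : Submodule R M) : Set M :=
  {z | ∃ c ∈ ringCirc R, ∃ e₀ : ℕ, ∀ e : ℕ, e₀ ≤ e →
    toFrobAlg R p e c • frobPow R p e z ∈ frobBracket R p e L}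

/-- `c` is a `q₀`-weak test element (`q₀ = p^{e₀}`): `c ∈ R°` and membership in tight
closure is detected by `c` from `q₀` onwards, for all submodules of all modules. -/
def IsWeakTestElement (c : R) (e₀ : ℕ) : Prop :=
  c ∈ ringCirc R ∧
    ∀ (N : Type u) [AddCommGroup N] [Module R N] (L : Submodule R N) (z : N),
      z ∈ tightClosure p L ↔
        ∀ e : ℕ, e₀ ≤ e → toFrobAlg R p e c • frobPow R p e z ∈ frobBracket R p e L

end TC

section Frobenius

variable {R : Type u} [CommRing R] (p : ℕ) [Fact p.Prime] [CharP R p] (e : ℕ)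
  {N : Type u} [AddCommGroup N] [Module R N]

lemma smul_frobPow (s : FrobAlg R p e) (x : N) :
    s • frobPow R p e x = (s ⊗ₜ[R] x : FrobM R p e N) :=
  (smul_tmul' s 1 x).trans (by rw [smul_eq_mul, mul_one])

noncomputable def frobPowₛₗ : N →ₛₗ[frobAlgMap R p e] FrobM R p e N where
  toFun := frobPow R p e
  map_add' := tmul_add 1
  map_smul' a x := by
    rw [smul_frobPow, frobPow, ← smul_tmul, Algebra.smul_def, mul_one]
    rfl

lemma frobPowₛₗ_apply (x : N) : frobPowₛₗ p e x = frobPow R p e x := rfl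

lemma frobPow_smul (a : R) (x : N) :
    frobPow R p e (a • x) = frobAlgMap R p e a • frobPow R p e x :=
  map_smulₛₗ (frobPowₛₗ p e) a x

lemma frobBracket_eq_span (K : Submodule R N) :
    frobBracket R p e K = Submodule.span (FrobAlg R p e) (frobPow R p e '' K) := by
  apply le_antisymm
  · rintro x ⟨t, rfl⟩
    show (LinearMap.baseChange (FrobAlg R p e) K.subtype) t
        ∈ Submodule.span (FrobAlg R p e) (frobPow R p e '' (K : Set N))
    induction t using TensorProduct.induction_on with
    | zero => rw [map_zero]; exact Submodule.zero_mem _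
    | tmul s x =>
      rw [LinearMap.baseChange_tmul, ← smul_frobPow]
      exact Submodule.smul_mem (Submodule.span (FrobAlg R p e) (frobPow R p e '' (K : Set N))) s
        (Submodule.subset_span ⟨(x : N), x.2, rfl⟩)
    | add t₁ t₂ h₁ h₂ => rw [map_add]; exact Submodule.add_mem _ h₁ h₂
  · rw [Submodule.span_le]
    rintro _ ⟨x, hx, rfl⟩
    exact ⟨1 ⊗ₜ ⟨x, hx⟩, rfl⟩

lemma frobPow_mem_frobBracket {K : Submodule R N} {x : N} (hx : x ∈ K) :
    frobPow R p e x ∈ frobBracket R p e K := by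
  rw [frobBracket_eq_span]
  exact Submodule.subset_span ⟨x, hx, rfl⟩

lemma smul_mem_frobBracket {K K' : Submodule R N} {s : FrobAlg R p e}
    (h : ∀ x ∈ K, s • frobPow R p e x ∈ frobBracket R p e K') {v : FrobM R p e N}
    (hv : v ∈ frobBracket R p e K) : s • v ∈ frobBracket R p e K' := by
  have hK : frobBracket R p e K ≤ (frobBracket R p e K').comap (s • LinearMap.id) := by
    rw [frobBracket_eq_span, Submodule.span_le]
    rintro _ ⟨x, hx, rfl⟩
    exact h x hx
  exact hK hv

lemma frobBracket_mono {K K' : Submodule R N} (h : K ≤ K') :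
    frobBracket R p e K ≤ frobBracket R p e K' := by
  rw [frobBracket_eq_span, frobBracket_eq_span]
  exact Submodule.span_mono (Set.image_mono h)

lemma frobBracket_sup (K K' : Submodule R N) :
    frobBracket R p e (K ⊔ K') = frobBracket R p e K ⊔ frobBracket R p e K' := by
  refine le_antisymm ?_ (sup_le (frobBracket_mono p e le_sup_left)
    (frobBracket_mono p e le_sup_right))
  rw [frobBracket_eq_span, Submodule.span_le]
  rintro _ ⟨_, hx, rfl⟩
  obtain ⟨y, hy, y', hy', rfl⟩ := Submodule.mem_sup.mp hx
  rw [← frobPowₛₗ_apply, map_add]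
  exact Submodule.add_mem_sup (frobPow_mem_frobBracket p e hy) (frobPow_mem_frobBracket p e hy')

lemma frobBracket_smul_le (I : Ideal R) (K : Submodule R N) :
    frobBracket R p e (I • K) ≤ I.map (frobAlgMap R p e) • frobBracket R p e K := by
  have hIK : I • K ≤ (I.map (frobAlgMap R p e) • frobBracket R p e K).comap (frobPowₛₗ p e) :=
    Submodule.smul_le.mpr fun a ha y hy => by
      rw [Submodule.mem_comap, frobPowₛₗ_apply, frobPow_smul]
      exact Submodule.smul_mem_smul (Ideal.mem_map_of_mem _ ha) (frobPow_mem_frobBracket p e hy)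
  rw [frobBracket_eq_span, Submodule.span_le]
  rintro _ ⟨x, hx, rfl⟩
  exact hIK hx

/-- `{x ∈ N | c x^q ∈ K^{[q]}}`. -/
noncomputable def frobColon (c : R) (K : Submodule R N) : Submodule R N :=
  (frobBracket R p e K).comap (toFrobAlg R p e c • frobPowₛₗ p e)

lemma mem_frobColon {c : R} {K : Submodule R N} {x : N} :
    x ∈ frobColon p e c K ↔ toFrobAlg R p e c • frobPow R p e x ∈ frobBracket R p e K :=
  Iff.rfl

lemma le_frobColon (c : R) (K : Submodule R N) : K ≤ frobColon p e c K :=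
  fun _ hx => Submodule.smul_mem _ _ (frobPow_mem_frobBracket p e hx)

lemma frobColon_mono (c : R) {K K' : Submodule R N} (h : K ≤ K') :
    frobColon p e c K ≤ frobColon p e c K' :=
  Submodule.comap_mono (frobBracket_mono p e h)

lemma frobColon_le_frobColon_mul {c d : R} {K K' : Submodule R N}
    (h : K ≤ frobColon p e d K') : frobColon p e c K ≤ frobColon p e (d * c) K' := by
  intro x hx
  rw [mem_frobColon] at hx ⊢
  rw [show toFrobAlg R p e (d * c) = toFrobAlg R p e d * toFrobAlg R p e c from rfl, mul_smul]
  exact smul_mem_frobBracket p e (fun y hy => h hy) hx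

lemma smul_frobColon_le (c : R) (I : Ideal R) (K : Submodule R N) :
    I • frobColon p e c K ≤ frobColon p e c (I • K) := by
  refine Submodule.smul_le.mpr fun a ha x hx => ?_
  rw [mem_frobColon, frobPow_smul, smul_comm]
  refine smul_mem_frobBracket p e (fun y hy => ?_) hx
  rw [← frobPow_smul]
  exact frobPow_mem_frobBracket p e (Submodule.smul_mem_smul ha hy)

end Frobenius

lemma Submodule.mem_of_forall_mem_sup_pow_smul {A P : Type*} [CommRing A] [IsNoetherianRing A]
    [IsLocalRing A] [AddCommGroup P] [Module A P] [Module.Finite A P] {I : Ideal A} (hI : I ≠ ⊤)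
    {K : Submodule A P} {x : P} (hx : ∀ r : ℕ, x ∈ K ⊔ I ^ r • ⊤) : x ∈ K := by
  have hmem : K.mkQ x ∈ ⨅ r : ℕ, (I ^ r • ⊤ : Submodule A (P ⧸ K)) :=
    Submodule.mem_iInf _ |>.mpr fun r => by
      simpa only [Submodule.map_sup, Submodule.mkQ_map_self, bot_sup_eq, Submodule.map_smul'',
        Submodule.map_top, Submodule.range_mkQ] using Submodule.mem_map_of_mem (f := K.mkQ) (hx r)
  rwa [Ideal.iInf_pow_smul_eq_bot_of_isLocalRing I hI, Submodule.mem_bot, Submodule.mkQ_apply,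
    Submodule.Quotient.mk_eq_zero] at hmem

section TightClosure

variable {R : Type u} [CommRing R] {p : ℕ} [Fact p.Prime] [CharP R p]
  {N : Type u} [AddCommGroup N] [Module R N]

lemma mul_mem_ringCirc {c d : R} (hc : c ∈ ringCirc R) (hd : d ∈ ringCirc R) :
    c * d ∈ ringCirc R := fun P hP hcd =>
  (hP.1.1.mem_or_mem hcd).elim (hc P hP) (hd P hP)

lemma subset_tightClosure_of_le_frobColon {c : R} (hc : c ∈ ringCirc R) (e₀ : ℕ)
    {M K : Submodule R N} (h : ∀ e, e₀ ≤ e → M ≤ frobColon p e c K) :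
    (M : Set N) ⊆ tightClosure p K :=
  fun _ hz => ⟨c, hc, e₀, fun e he => h e he hz⟩

lemma IsWeakTestElement.le_frobColon {c : R} {e₀ : ℕ} (hc : IsWeakTestElement p c e₀)
    {M K : Submodule R N} (h : (M : Set N) ⊆ tightClosure p K) {e : ℕ} (he : e₀ ≤ e) :
    M ≤ frobColon p e c K :=
  fun z hz => (hc.2 N K z).mp (h hz) e he

lemma sup_pow_smul_le_frobColon {e : ℕ} {c : R} {I : Ideal R} {L M : Submodule R N}
    (h : M ≤ frobColon p e c (L ⊔ I • M)) (r : ℕ) :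
    L ⊔ I ^ r • M ≤ frobColon p e c (L ⊔ I ^ (r + 1) • M) := by
  refine sup_le ((le_frobColon p e c L).trans (frobColon_mono p e c le_sup_left)) ?_
  calc I ^ r • M ≤ I ^ r • frobColon p e c (L ⊔ I • M) := Submodule.smul_mono le_rfl h
    _ ≤ frobColon p e c (I ^ r • (L ⊔ I • M)) := smul_frobColon_le p e c _ _
    _ ≤ frobColon p e c (L ⊔ I ^ (r + 1) • M) := by
      refine frobColon_mono p e c ?_
      rw [Submodule.smul_sup, ← Submodule.mul_smul, ← pow_succ]
      exact sup_le_sup_right Submodule.smul_le_right _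

lemma subset_tightClosure_sup_pow_smul {c : R} {e₀ : ℕ}
    (hc : IsWeakTestElement p c e₀) {I : Ideal R} {L M : Submodule R N}
    (h : (M : Set N) ⊆ tightClosure p (L ⊔ I • M)) (r : ℕ) :
    (M : Set N) ⊆ tightClosure p (L ⊔ I ^ r • M) := by
  induction r with
  | zero =>
    rw [pow_zero, Ideal.one_eq_top, Submodule.top_smul]
    exact subset_tightClosure_of_le_frobColon hc.1 0 fun e _ =>
      le_sup_right.trans (le_frobColon p e c _)
  | succ r ih =>
    refine subset_tightClosure_of_le_frobColon (mul_mem_ringCirc hc.1 hc.1) e₀ fun e he => ?_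
    exact (hc.le_frobColon ih he).trans
      (frobColon_le_frobColon_mul p e (sup_pow_smul_le_frobColon (hc.le_frobColon h he) r))

end TightClosure

section Local

variable {R : Type u} [CommRing R] [IsLocalRing R] (p : ℕ) [Fact p.Prime] [CharP R p] (e : ℕ)

instance : IsLocalRing (FrobAlg R p e) := inferInstanceAs (IsLocalRing R)

instance [IsNoetherianRing R] : IsNoetherianRing (FrobAlg R p e) :=
  inferInstanceAs (IsNoetherianRing R)

instance (N : Type u) [AddCommGroup N] [Module R N] [Module.Finite R N] :
    Module.Finite (FrobAlg R p e) (FrobM R p e N) :=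
  inferInstanceAs (Module.Finite (FrobAlg R p e) (FrobAlg R p e ⊗[R] N))

lemma map_frobAlgMap_maximalIdeal_ne_top :
    (IsLocalRing.maximalIdeal R).map (frobAlgMap R p e) ≠ ⊤ :=
  ne_top_of_le_ne_top (IsLocalRing.maximalIdeal.isMaximal _).ne_top <|
    Ideal.map_le_iff_le_comap.mpr fun _ ha =>
      Ideal.pow_mem_of_mem _ ha _ (pow_pos (Fact.out : p.Prime).pos e)

lemma iInf_frobColon_sup_pow_smul_le [IsNoetherianRing R] {N : Type u} [AddCommGroup N]
    [Module R N] [Module.Finite R N] (c : R) (L M : Submodule R N) :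
    ⨅ r : ℕ, frobColon p e c (L ⊔ IsLocalRing.maximalIdeal R ^ r • M) ≤ frobColon p e c L := by
  intro z hz
  rw [mem_frobColon]
  refine Submodule.mem_of_forall_mem_sup_pow_smul (map_frobAlgMap_maximalIdeal_ne_top p e)
    fun r => ?_
  have hzr : z ∈ frobColon p e c (L ⊔ IsLocalRing.maximalIdeal R ^ r • M) :=
    Submodule.mem_iInf _ |>.mp hz r
  rw [mem_frobColon, frobBracket_sup] at hzr
  refine sup_le_sup_left ((frobBracket_smul_le p e _ M).trans ?_) _ hzr
  rw [Ideal.map_pow]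
  exact Submodule.smul_mono le_rfl le_top

end Local

theorem stmt13_general {R : Type u} [CommRing R] [IsNoetherianRing R] [IsLocalRing R]
    (p : ℕ) [Fact p.Prime] [CharP R p]
    (c : R) (e₀ : ℕ) (hc : IsWeakTestElement p c e₀)
    (N : Type u) [AddCommGroup N] [Module R N] [Module.Finite R N]
    (L M : Submodule R N)
    (h : (M : Set N) ⊆ tightClosure p (L ⊔ (IsLocalRing.maximalIdeal R) • M)) :
    (∀ r : ℕ, 1 ≤ r →
      (M : Set N) ⊆ tightClosure p (L ⊔ (IsLocalRing.maximalIdeal R) ^ r • M)) ∧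
    (M : Set N) ⊆ tightClosure p L := by
  have hpow := subset_tightClosure_sup_pow_smul hc h
  refine ⟨fun r _ => hpow r, subset_tightClosure_of_le_frobColon hc.1 e₀ fun e he => ?_⟩
  exact (le_iInf fun r => hc.le_frobColon (hpow r) he).trans
    (iInf_frobColon_sup_pow_smul_le p e c L M)

/-- Nakayama lemma for tight closure: Let `(R,𝔪)` be Noetherian local
of characteristic `p` with a `q₀`-weak test element `c`, and `L ⊆ M ⊆ N` finitely
generated modules.  If `M ⊆ (L + 𝔪M)^*_N` then `M ⊆ (L + 𝔪ʳM)^*_N` for every `r ≥ 1`,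
and consequently `M ⊆ L^*_N`. -/
theorem stmt13 {R : Type u} [CommRing R] [IsNoetherianRing R] [IsLocalRing R]
    (p : ℕ) [Fact p.Prime] [CharP R p]
    (c : R) (e₀ : ℕ) (hc : IsWeakTestElement p c e₀)
    (N : Type u) [AddCommGroup N] [Module R N] [Module.Finite R N]
    (L M : Submodule R N) (hLM : L ≤ M)
    (h : (M : Set N) ⊆ tightClosure p (L ⊔ (IsLocalRing.maximalIdeal R) • M)) :
    (∀ r : ℕ, 1 ≤ r →
      (M : Set N) ⊆ tightClosure p (L ⊔ (IsLocalRing.maximalIdeal R) ^ r • M)) ∧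
    (M : Set N) ⊆ tightClosure p L :=
  stmt13_general p c e₀ hc N L M h
end
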